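/- Let $d \geq 2$ and let $F_1, \ldots, F_d$ be the recursively defined $2^{d-1} \times 2^{d-1}$ anti-commuting self-adjoint unitaries. Then for every $y \in \mathbb{R}^d$, $\left\| \sum_{j=1}^d (F_j - y_j I) \otimes F_j \right\| \geq \sqrt{\|y\|_2^2 + (d-1)^2} + 1$. -/

import Mathlib

open Matrix Kronecker

noncomputable def pauliX : Matrix (Fin 2) (Fin 2) ℂ := !![0, 1; 1, 0]
noncomputable def pauliZ : Matrix (Fin 2) (Fin 2) ℂ := !![1, 0; 0, -1]

/-- The recursively defined matrices `F j ^ [d]` of size `2 ^ (d-1)`: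
`F 1 ^ [1] = 1`, `F j ^ [d] = σₓ ⊗ F j ^ [d-1]` for `j < d`, and `F d ^ [d] = σ_z ⊗ I`. -/
noncomputable def Fmat : (d : ℕ) → Fin d → Matrix (Fin (2 ^ (d - 1))) (Fin (2 ^ (d - 1))) ℂ
  | 0 => fun j => j.elim0
  | 1 => fun _ => 1
  | (d + 2) => fun j =>
    if h : (j : ℕ) < d + 1 then
      Matrix.reindex
        (finProdFinEquiv.trans (finCongr (by rw [show d + 1 - 1 = d from rfl,
          show d + 2 - 1 = d + 1 from rfl, pow_succ]; ring)))
        (finProdFinEquiv.trans (finCongr (by rw [show d + 1 - 1 = d from rfl,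
          show d + 2 - 1 = d + 1 from rfl, pow_succ]; ring)))
        (pauliX ⊗ₖ Fmat (d + 1) ⟨j, h⟩)
    else
      Matrix.reindex
        (finProdFinEquiv.trans (finCongr (by rw [show d + 2 - 1 = d + 1 from rfl, pow_succ]; ring)))
        (finProdFinEquiv.trans (finCongr (by rw [show d + 2 - 1 = d + 1 from rfl, pow_succ]; ring)))
        (pauliZ ⊗ₖ (1 : Matrix (Fin (2 ^ d)) (Fin (2 ^ d)) ℂ))

/-!
Write `G = ∑ₖ yₖ Fₖ`. The Clifford relations `Fⱼ² = 1`, `FⱼFₖ = -FₖFⱼ` give `G² = ‖y‖²` and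
`Fⱼ G Fⱼ = 2 yⱼ Fⱼ - G`. Since every `Fⱼ` is symmetric, under vectorization the operator
`∑ (Fⱼ - yⱼ) ⊗ Fⱼ` acts on matrices as `X ↦ ∑ Fⱼ X (Fⱼ - yⱼ)`, which sends `c - G` to
`(c d + ‖y‖²) - (c + 2 - d) G`. For `c = s + d - 1`, `s = √(‖y‖² + (d-1)²)`, this is
`(s + 1)(c - G)`, and `c - G ≠ 0` because `c² > ‖y‖² = G²`. So `s + 1` is an eigenvalue, and
eigenvalues are bounded by the operator norm.
-/

def finTwoProdPowEquiv (m : ℕ) : Fin 2 × Fin (2 ^ m) ≃ Fin (2 ^ (m + 1)) :=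
  finProdFinEquiv.trans (finCongr (pow_succ' 2 m).symm)

theorem Fmat_castSucc (m : ℕ) (j : Fin (m + 1)) :
    Fmat (m + 2) j.castSucc =
      reindexAlgEquiv ℂ ℂ (finTwoProdPowEquiv m) (pauliX ⊗ₖ Fmat (m + 1) j) := by
  simp only [Fmat, Fin.val_castSucc, j.isLt, dif_pos]; rfl

theorem Fmat_last (m : ℕ) :
    Fmat (m + 2) (Fin.last (m + 1)) =
      reindexAlgEquiv ℂ ℂ (finTwoProdPowEquiv m) (pauliZ ⊗ₖ 1) := by
  simp only [Fmat, Fin.val_last, lt_irrefl, dif_neg, not_false_eq_true]; rfl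

theorem pauliX_mul_self : pauliX * pauliX = 1 := by
  simp [pauliX, one_fin_two]

theorem pauliZ_mul_self : pauliZ * pauliZ = 1 := by
  simp [pauliZ, one_fin_two]

theorem pauliX_mul_pauliZ_add_pauliZ_mul_pauliX : pauliX * pauliZ + pauliZ * pauliX = 0 := by
  ext i j; fin_cases i <;> fin_cases j <;> simp [pauliX, pauliZ]

theorem isSymm_pauliX : pauliX.IsSymm := by
  ext i j; fin_cases i <;> fin_cases j <;> rfl

theorem isSymm_pauliZ : pauliZ.IsSymm := by
  ext i j; fin_cases i <;> fin_cases j <;> rfl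

theorem Fmat_mul_self : ∀ (d : ℕ) (j : Fin d), Fmat d j * Fmat d j = 1
  | 1, _ => mul_one 1
  | m + 2, j => by
    induction j using Fin.lastCases with
    | last =>
      rw [Fmat_last, ← map_mul, ← mul_kronecker_mul, pauliZ_mul_self, mul_one, one_kronecker_one,
        map_one]
    | cast j =>
      rw [Fmat_castSucc, ← map_mul, ← mul_kronecker_mul, pauliX_mul_self, Fmat_mul_self (m + 1) j,
        one_kronecker_one, map_one]

theorem Fmat_anticomm : ∀ d : ℕ, Pairwise fun j k : Fin d =>
    Fmat d j * Fmat d k + Fmat d k * Fmat d j = 0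
  | 1, j, k, h => absurd (Subsingleton.elim j k) h
  | m + 2, j, k, h => by
    induction j using Fin.lastCases <;> induction k using Fin.lastCases
    · exact absurd rfl h
    · rw [Fmat_last, Fmat_castSucc, ← map_mul, ← map_mul, ← map_add, ← mul_kronecker_mul,
        ← mul_kronecker_mul, mul_one, one_mul, ← add_kronecker, add_comm (pauliZ * pauliX),
        pauliX_mul_pauliZ_add_pauliZ_mul_pauliX, zero_kronecker, map_zero]
    · rw [Fmat_last, Fmat_castSucc, ← map_mul, ← map_mul, ← map_add, ← mul_kronecker_mul,
        ← mul_kronecker_mul, mul_one, one_mul, ← add_kronecker,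
        pauliX_mul_pauliZ_add_pauliZ_mul_pauliX, zero_kronecker, map_zero]
    · rename_i j k
      rw [Fmat_castSucc, Fmat_castSucc, ← map_mul, ← map_mul, ← map_add, ← mul_kronecker_mul,
        ← mul_kronecker_mul, pauliX_mul_self, ← kronecker_add,
        Fmat_anticomm (m + 1) (h ∘ congrArg _), kronecker_zero, map_zero]

theorem Matrix.IsSymm.kronecker {α m n : Type*} [Mul α] {A : Matrix m m α} {B : Matrix n n α}
    (hA : A.IsSymm) (hB : B.IsSymm) : (A ⊗ₖ B).IsSymm := by
  rw [IsSymm, ← kroneckerMap_transpose, hA.eq, hB.eq]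

theorem isSymm_Fmat : ∀ (d : ℕ) (j : Fin d), (Fmat d j).IsSymm
  | 1, _ => isSymm_one
  | m + 2, j => by
    induction j using Fin.lastCases with
    | last =>
      rw [Fmat_last, coe_reindexAlgEquiv]
      exact (isSymm_pauliZ.kronecker isSymm_one).reindex _
    | cast j =>
      rw [Fmat_castSucc, coe_reindexAlgEquiv]
      exact (isSymm_pauliX.kronecker (isSymm_Fmat (m + 1) j)).reindex _

section AnticommutingInvolutions

variable {ι R A : Type*} [CommRing R] [Ring A] [Algebra R A] {F : ι → A}

theorem mul_sum_smul_add_sum_smul_mul_of_notMem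
    (hanti : Pairwise fun j k => F j * F k + F k * F j = 0) (y : ι → R) {s : Finset ι} {j : ι}
    (hj : j ∉ s) : F j * ∑ k ∈ s, y k • F k + (∑ k ∈ s, y k • F k) * F j = 0 := by
  rw [Finset.mul_sum, Finset.sum_mul, ← Finset.sum_add_distrib]
  refine Finset.sum_eq_zero fun k hk => ?_
  rw [mul_smul_comm, smul_mul_assoc, ← smul_add, hanti (ne_of_mem_of_not_mem hk hj).symm,
    smul_zero]

theorem sum_smul_mul_sum_smul [Fintype ι] (hsq : ∀ j, F j * F j = 1)
    (hanti : Pairwise fun j k => F j * F k + F k * F j = 0) (y : ι → R) (s : Finset ι) :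
    (∑ k ∈ s, y k • F k) * ∑ k ∈ s, y k • F k = (∑ k ∈ s, y k ^ 2) • 1 := by
  classical
  induction s using Finset.induction_on with
  | empty => simp
  | insert j s hj ih =>
    have h := mul_sum_smul_add_sum_smul_mul_of_notMem hanti y hj
    rw [Finset.sum_insert hj, Finset.sum_insert hj, add_mul, mul_add, mul_add, ih, smul_mul_smul,
      hsq, smul_mul_assoc, mul_smul_comm, add_smul]
    linear_combination (norm := module) y j • h

theorem mul_sum_smul_add_sum_smul_mul [Fintype ι] (hsq : ∀ j, F j * F j = 1)
    (hanti : Pairwise fun j k => F j * F k + F k * F j = 0) (y : ι → R) (j : ι) :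
    F j * ∑ k, y k • F k + (∑ k, y k • F k) * F j = (2 * y j) • 1 := by
  classical
  have h := mul_sum_smul_add_sum_smul_mul_of_notMem hanti y (Finset.notMem_erase j Finset.univ)
  rw [← Finset.add_sum_erase _ _ (Finset.mem_univ j), mul_add, add_mul, mul_smul_comm,
    smul_mul_assoc, hsq]
  linear_combination (norm := module) h

theorem mul_sum_smul_mul_self [Fintype ι] (hsq : ∀ j, F j * F j = 1)
    (hanti : Pairwise fun j k => F j * F k + F k * F j = 0) (y : ι → R) (j : ι) :
    F j * (∑ k, y k • F k) * F j = (2 * y j) • F j - ∑ k, y k • F k := by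
  have h := congrArg (· * F j) (mul_sum_smul_add_sum_smul_mul hsq hanti y j)
  simp only [add_mul, mul_assoc, hsq, mul_one, smul_mul_assoc, one_mul] at h
  rw [mul_assoc]
  linear_combination (norm := module) h

theorem sum_mul_mul_sub_smul_one_eq_smul [Fintype ι] (hsq : ∀ j, F j * F j = 1)
    (hanti : Pairwise fun j k => F j * F k + F k * F j = 0) (y : ι → R) {c : R}
    (hc : c * (c - 2 * (Fintype.card ι - 1)) = ∑ j, y j ^ 2) :
    ∑ j, F j * (c • 1 - ∑ k, y k • F k) * (F j - y j • 1) =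
      (c - Fintype.card ι + 2) • (c • 1 - ∑ k, y k • F k) := by
  set G := ∑ k, y k • F k with hG
  have hconj (j : ι) : F j * (c • 1 - G) * F j = c • 1 - (2 * y j) • F j + G := by
    rw [mul_sub, sub_mul, mul_smul_comm, mul_one, smul_mul_assoc, hsq,
      mul_sum_smul_mul_self hsq hanti]
    abel
  have hshift : ∑ j, F j * (c • 1 - G) * (y j • 1) = G * (c • 1 - G) := by
    simp only [mul_smul_comm, mul_one, hG, Finset.sum_mul, smul_mul_assoc]
  have hGG : G * G = (∑ j, y j ^ 2) • 1 := sum_smul_mul_sum_smul hsq hanti y _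
  have hsum : ∑ j, (2 * y j) • F j = (2 : R) • G := by simp only [hG, Finset.smul_sum, mul_smul]
  calc ∑ j, F j * (c • 1 - G) * (F j - y j • 1)
      = ∑ j, (c • 1 - (2 * y j) • F j + G) - G * (c • 1 - G) := by
        rw [← hshift, ← Finset.sum_sub_distrib]
        exact Finset.sum_congr rfl fun j _ => by rw [mul_sub (F j * (c • 1 - G)), hconj]
    _ = (c - Fintype.card ι + 2) • (c • 1 - G) := by
        simp only [Finset.sum_add_distrib, Finset.sum_sub_distrib, hsum, Finset.sum_const,
          Finset.card_univ, mul_sub, mul_smul_comm, mul_one, hGG, ← hc]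
        module

theorem smul_one_sub_sum_smul_ne_zero [Fintype ι] [Nontrivial A] [FaithfulSMul R A]
    (hsq : ∀ j, F j * F j = 1) (hanti : Pairwise fun j k => F j * F k + F k * F j = 0)
    (y : ι → R) {c : R} (hc : c ^ 2 ≠ ∑ j, y j ^ 2) : c • 1 - ∑ k, y k • F k ≠ 0 := by
  intro h
  have hGG := sum_smul_mul_sum_smul hsq hanti y Finset.univ
  rw [← sub_eq_zero.mp h, smul_mul_smul, one_mul, ← sq] at hGG
  exact hc (FaithfulSMul.algebraMap_injective R A
    (by simpa only [Algebra.algebraMap_eq_smul_one] using hGG))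

end AnticommutingInvolutions

theorem Matrix.sum_kronecker_mulVec_vec {ι n R : Type*} [Fintype ι] [Fintype n]
    [CommSemiring R] (B C : ι → Matrix n n R) (X : Matrix n n R) :
    (∑ j, B j ⊗ₖ C j) *ᵥ vec X = vec (∑ j, C j * X * (B j)ᵀ) := by
  simp only [sum_mulVec, kronecker_mulVec_vec, vec_sum]

theorem ContinuousLinearMap.norm_le_opNorm_of_apply_eq_smul {𝕜 E : Type*}
    [NontriviallyNormedField 𝕜] [NormedAddCommGroup E] [NormedSpace 𝕜 E] (T : E →L[𝕜] E)
    {v : E} (hv : v ≠ 0) {μ : 𝕜} (h : T v = μ • v) : ‖μ‖ ≤ ‖T‖ := by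
  have := T.le_opNorm v
  rw [h, norm_smul] at this
  exact le_of_mul_le_mul_right this (norm_pos_iff.mpr hv)

/-- For the recursively defined anti-commuting self-adjoint unitaries `F 1, …, F d`
(`d ≥ 2`) and any `y ∈ ℝ^d`, the operator norm of `∑ j, (F j - y j • I) ⊗ F j` is at
least `√(‖y‖² + (d-1)²) + 1`. -/
theorem Fmat_shifted_kron_sum_norm_lower_bound (d : ℕ) (hd : 2 ≤ d)
    (y : EuclideanSpace ℝ (Fin d)) :
    Real.sqrt (‖y‖ ^ 2 + ((d : ℝ) - 1) ^ 2) + 1 ≤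
      ‖Matrix.toEuclideanCLM (𝕜 := ℂ)
        ((∑ j : Fin d, (Fmat d j - (y j : ℂ) • 1) ⊗ₖ Fmat d j :
          Matrix (Fin (2 ^ (d - 1)) × Fin (2 ^ (d - 1)))
            (Fin (2 ^ (d - 1)) × Fin (2 ^ (d - 1))) ℂ))‖ := by
  set s := √(‖y‖ ^ 2 + ((d : ℝ) - 1) ^ 2)
  have hs : s ^ 2 = ‖y‖ ^ 2 + ((d : ℝ) - 1) ^ 2 := Real.sq_sqrt (by positivity)
  have hys : ‖y‖ ≤ s := Real.le_sqrt_of_sq_le (by nlinarith)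
  have hd₂ : (2 : ℝ) ≤ d := by exact_mod_cast hd
  set M : Matrix (Fin (2 ^ (d - 1))) (Fin (2 ^ (d - 1))) ℂ :=
    (s + d - 1 : ℝ) • 1 - ∑ k, y k • Fmat d k
  have hM : M ≠ 0 := smul_one_sub_sum_smul_ne_zero (Fmat_mul_self d)
    (Fmat_anticomm d) _ (by
      rw [← EuclideanSpace.real_norm_sq_eq]
      exact (pow_lt_pow_left₀ (by linarith) (norm_nonneg y) two_ne_zero).ne')
  have hMeig : ∑ j, Fmat d j * M * (Fmat d j - y j • 1) = (s + 1) • M := by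
    rw [sum_mul_mul_sub_smul_one_eq_smul (Fmat_mul_self d) (Fmat_anticomm d) _
      (by rw [← EuclideanSpace.real_norm_sq_eq, Fintype.card_fin]; linear_combination hs)]
    rw [Fintype.card_fin]; congr 1; ring
  calc √(‖y‖ ^ 2 + ((d : ℝ) - 1) ^ 2) + 1 = ‖((s + 1 : ℝ) : ℂ)‖ := by
        rw [Complex.norm_real, Real.norm_of_nonneg (by positivity)]
    _ ≤ _ := by
      refine ContinuousLinearMap.norm_le_opNorm_of_apply_eq_smul _
        (v := WithLp.toLp 2 (vec M)) (by simpa [vec_eq_zero_iff]) ?_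
      simp only [toEuclideanCLM_toLp, sum_kronecker_mulVec_vec, Complex.coe_smul, transpose_sub,
        transpose_smul, transpose_one, (isSymm_Fmat d _).eq, hMeig, vec_smul, WithLp.toLp_smul]
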